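/- arXiv:2404.17737 — 4 statements merged into one kernel-verified Lean document; each statement's English description precedes it below -/
import Mathlib

section
/- Let ψ ≥ 0 be a real number. Then the inequality (1 − (1+ψ)·p·w + ψ·p²·w²)² ≤ (1 − p·w)² holds for all p ∈ [0,1] and all w ∈ [0,1] if and only if ψ ∈ [0,2]. -/
/-!
Writing `x = p * w`, the polynomial factors as `1 - (1 + ψ) x + ψ x² = (1 - x) (1 - ψ x)`.
So for `x < 1` the inequality says `|1 - ψ x| ≤ 1`, i.e. `0 ≤ ψ x ≤ 2`, and this holds for every
`x ∈ [0, 1)` exactly when `0 ≤ ψ ≤ 2`; at `x = 1` both sides vanish.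
-/

open Set

theorem one_sub_one_add_mul_add_mul_sq {R : Type*} [CommRing R] (ψ x : R) :
    1 - (1 + ψ) * x + ψ * x ^ 2 = (1 - x) * (1 - ψ * x) := by
  ring

section LinearOrderedField

variable {α : Type*} [Field α] [LinearOrder α] [IsStrictOrderedRing α]

theorem mul_sq_le_sq_iff_abs_le_one {a b : α} (ha : a ≠ 0) : (a * b) ^ 2 ≤ a ^ 2 ↔ |b| ≤ 1 := by
  rw [mul_pow, mul_le_iff_le_one_right (pow_pos (abs_pos.2 ha) 2 |>.trans_eq (sq_abs a)),
    sq_le_one_iff_abs_le_one]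

theorem abs_one_sub_le_one_iff {y : α} : |1 - y| ≤ 1 ↔ y ∈ Icc 0 2 := by
  rw [abs_le, mem_Icc]
  constructor <;> rintro ⟨h₁, h₂⟩ <;> constructor <;> linarith

theorem pivot_sq_le_sq_iff {ψ x : α} (hx : x ≠ 1) :
    (1 - (1 + ψ) * x + ψ * x ^ 2) ^ 2 ≤ (1 - x) ^ 2 ↔ ψ * x ∈ Icc 0 2 := by
  rw [one_sub_one_add_mul_add_mul_sq, mul_sq_le_sq_iff_abs_le_one (sub_ne_zero.2 hx.symm),
    abs_one_sub_le_one_iff]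

theorem forall_mem_Ico_mul_mem_Icc_iff (ψ c : α) :
    (∀ x ∈ Ico (0 : α) 1, ψ * x ∈ Icc 0 c) ↔ ψ ∈ Icc 0 c := by
  refine ⟨fun h ↦ ?_, fun ⟨hψ, hψc⟩ x ⟨hx₀, hx₁⟩ ↦
    ⟨mul_nonneg hψ hx₀, (mul_le_of_le_one_right hψ hx₁.le).trans hψc⟩⟩
  have hc : 0 ≤ c := by simpa using (h 0 ⟨le_rfl, zero_lt_one⟩).2
  have hψ : 0 ≤ ψ := by
    simpa using (h 2⁻¹ ⟨by positivity, inv_lt_one_of_one_lt₀ one_lt_two⟩).1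
  refine ⟨hψ, le_of_forall_lt_imp_le_of_dense fun d hd ↦ ?_⟩
  rcases le_or_gt d 0 with hd₀ | hd₀
  · exact hd₀.trans hc
  have hψ₀ : 0 < ψ := hd₀.trans hd
  simpa [mul_div_cancel₀ d hψ₀.ne'] using
    (h (d / ψ) ⟨by positivity, (div_lt_one hψ₀).2 hd⟩).2

end LinearOrderedField

theorem neutral_pivot_iff_general (ψ : ℝ) :
    (∀ p ∈ Set.Icc (0:ℝ) 1, ∀ w ∈ Set.Icc (0:ℝ) 1,
      (1 - (1 + ψ) * p * w + ψ * p ^ 2 * w ^ 2) ^ 2 ≤ (1 - p * w) ^ 2)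
      ↔ ψ ∈ Set.Icc (0:ℝ) 2 := by
  rw [← forall_mem_Ico_mul_mem_Icc_iff]
  constructor
  · intro h x hx
    rw [← pivot_sq_le_sq_iff hx.2.ne]
    simpa using h x (Ico_subset_Icc_self hx) 1 (right_mem_Icc.2 zero_le_one)
  · rintro h p ⟨hp₀, hp₁⟩ w ⟨hw₀, hw₁⟩
    have hx₀ : 0 ≤ p * w := mul_nonneg hp₀ hw₀
    have hx₁ : p * w ≤ 1 := mul_le_one₀ hp₁ hw₀ hw₁
    rw [show 1 - (1 + ψ) * p * w + ψ * p ^ 2 * w ^ 2 = 1 - (1 + ψ) * (p * w) + ψ * (p * w) ^ 2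
      by ring]
    rcases eq_or_ne (p * w) 1 with hx | hx
    · simp [hx]
    · exact (pivot_sq_le_sq_iff hx).2 (h _ ⟨hx₀, hx₁.lt_of_ne hx⟩)

/-- The algebraic core of Theorem 1: for `ψ ≥ 0`, the limiting squared-bias inequality
`(1 - (1+ψ)pw + ψp²w²)² ≤ (1 - pw)²` holds for all `p, w ∈ [0,1]` iff `ψ ∈ [0,2]`. -/
theorem neutral_pivot_iff (ψ : ℝ) (hψ : 0 ≤ ψ) :
    (∀ p ∈ Set.Icc (0:ℝ) 1, ∀ w ∈ Set.Icc (0:ℝ) 1,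
      (1 - (1 + ψ) * p * w + ψ * p ^ 2 * w ^ 2) ^ 2 ≤ (1 - p * w) ^ 2)
      ↔ ψ ∈ Set.Icc (0:ℝ) 2 :=
  neutral_pivot_iff_general ψ
end

section
/- If ψ ∈ [0,2], then for all p ∈ [0,1] and all w ∈ [0,1], (1 − (1+ψ)·p·w + ψ·p²·w²)² ≤ (1 − p·w)². -/
/-- Sufficiency direction of Theorem 1: if `ψ ∈ [0,2]` then
`(1 - (1+ψ)pw + ψp²w²)² ≤ (1 - pw)²` for all `p, w ∈ [0,1]`. -/
theorem neutral_pivot_sufficiency (ψ : ℝ) (hψ : ψ ∈ Set.Icc (0:ℝ) 2) :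
    ∀ p ∈ Set.Icc (0:ℝ) 1, ∀ w ∈ Set.Icc (0:ℝ) 1,
      (1 - (1 + ψ) * p * w + ψ * p ^ 2 * w ^ 2) ^ 2 ≤ (1 - p * w) ^ 2 := by
  rintro p ⟨hp0, hp1⟩ w ⟨hw0, hw1⟩
  obtain ⟨hψ0, hψ2⟩ := hψ
  have key : (1 - (1 + ψ) * p * w + ψ * p ^ 2 * w ^ 2) = (1 - p * w) * (1 - ψ * (p * w)) := by ring
  rw [key, mul_pow]
  have hpw0 : 0 ≤ p * w := mul_nonneg hp0 hw0
  have hpw1 : p * w ≤ 1 := mul_le_one₀ hp1 hw0 hw1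
  have hx0 : 0 ≤ ψ * (p * w) := mul_nonneg hψ0 hpw0
  have hx2 : ψ * (p * w) ≤ 2 := by nlinarith
  have h1 : (1 - ψ * (p * w)) ^ 2 ≤ 1 := by nlinarith
  calc (1 - p * w) ^ 2 * (1 - ψ * (p * w)) ^ 2
      ≤ (1 - p * w) ^ 2 * 1 := by
        exact mul_le_mul_of_nonneg_left h1 (sq_nonneg _)
    _ = (1 - p * w) ^ 2 := by ring
end

section
/- Let f̄, ḡ be real numbers with f̄ ≠ ḡ, and let x ∈ (0,1]. Define the approximate global posterior expectation θ* = f̄ + (1/x)·(f̄ − ḡ), the minimal pivot θ_MP = f̄ + (f̄ − ḡ), and the neutral pivot θ_NP = f̄ + 2·(f̄ − ḡ). Then |θ* − θ_NP| ≤ |θ* − θ_MP| if and only if x ≤ 2/3. -/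
/-! The signed distances from `θ*` to the two pivots are `(1/x - 2)(f̄ - ḡ)` and `(1/x - 1)(f̄ - ḡ)`,
so after cancelling `|f̄ - ḡ| > 0` the question is whether `1/x` lies on the side of the midpoint
`3/2` of `1` and `2` nearer to `2`, i.e. whether `1/x ≥ 3/2`. -/

theorem abs_sub_le_abs_sub_iff_midpoint_le {K : Type*} [Field K] [LinearOrder K]
    [IsStrictOrderedRing K] {a b : K} (hab : a < b) (t : K) :
    |t - b| ≤ |t - a| ↔ (a + b) / 2 ≤ t := by
  have key : (t - a) ^ 2 - (t - b) ^ 2 = (b - a) * (2 * t - (a + b)) := by ring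
  rw [← sq_le_sq, ← sub_nonneg, key, mul_nonneg_iff_of_pos_left (sub_pos.mpr hab), sub_nonneg,
    div_le_iff₀ two_pos, mul_comm]

/-- The neutral pivot `f̄ + 2(f̄ - ḡ)` is at least as close as the minimal pivot
`f̄ + (f̄ - ḡ)` to the approximate global posterior expectation `f̄ + (1/x)(f̄ - ḡ)`
iff `x ≤ 2/3`. -/
theorem neutral_vs_minimal_pivot (fbar gbar : ℝ) (hfg : fbar ≠ gbar)
    (x : ℝ) (hx : x ∈ Set.Ioc (0:ℝ) 1) :
    |(fbar + (1/x) * (fbar - gbar)) - (fbar + 2 * (fbar - gbar))|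
        ≤ |(fbar + (1/x) * (fbar - gbar)) - (fbar + (fbar - gbar))|
      ↔ x ≤ 2/3 := by
  have hd : 0 < |fbar - gbar| := abs_pos.mpr (sub_ne_zero.mpr hfg)
  have to_neutral : (fbar + (1/x) * (fbar - gbar)) - (fbar + 2 * (fbar - gbar))
      = (1/x - 2) * (fbar - gbar) := by ring
  have to_minimal : (fbar + (1/x) * (fbar - gbar)) - (fbar + (fbar - gbar))
      = (1/x - 1) * (fbar - gbar) := by ring
  rw [to_neutral, to_minimal, abs_mul, abs_mul, mul_le_mul_iff_of_pos_right hd,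
    abs_sub_le_abs_sub_iff_midpoint_le one_lt_two, le_one_div (by norm_num) hx.1]
  norm_num
end

section
/- Let (Ω, 𝔽, ℙ) be a probability space, let J ≥ 2 and 1 ≤ K ≤ J − 1 be natural numbers, set p = K/J, and let θ, μ₀, w, ψ, m₀, m₁ be real numbers with m := m₀ + m₁ > 0. Let S₁, T₁,…,T_K, Δ_{K+1},…,Δ_J, E₁,…,E_K, G₁,…,G_K be mutually independent square-integrable real random variables with 𝔼[S₁] = θ, 𝔼[T_j] = θ for all j, 𝔼[Δ_j] = 𝔼[E_j] = 𝔼[G_j] = 0 for all j, Var(S₁) = v_s, Var(T_j) = v_t, Var(Δ_j) = v_δ, Var(E_j) = v_ε, Var(G_j) = v_γ. Define s = (m₀·μ₀ + m₁·S₁)/m, f̄ = (1 − p·w)·s + p·w·(1/K)∑_{j=1}^{K} T_j + (1−p)·(1/(J−K))∑_{j=K+1}^{J} Δ_j + p·(1/K)∑_{j=1}^{K} E_j, and ḡ = (1 − p²·w²)·s + p²·w²·(1/K)∑_{j=1}^{K} T_j + (1−p)·(1/(J−K))∑_{j=K+1}^{J} Δ_j + p²·w·(1/K)∑_{j=1}^{K}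 E_j + p·(1/K)∑_{j=1}^{K} G_j. Then, with A = 1 − (1+ψ)·p·w + ψ·p²·w² and B = (1+ψ) − ψ·p·w, 𝔼[((1+ψ)·f̄ − ψ·ḡ − θ)²] = A²·((m₀/m)²·(μ₀ − θ)² + (m₁/m)²·v_s) + (p·w²·B²/J)·v_t + ((1−p)/J)·v_δ + (p·B²/J)·v_ε + (ψ²·p/J)·v_γ. -/
/-!
The error `(1 + ψ) f̄ - ψ ḡ - θ` is an affine function `c + ∑ aᵢ Xᵢ` of the independent signals
and reporting errors, with coefficients constant on each block. By independence its second moment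
is the squared mean plus `∑ aᵢ² Var Xᵢ`, and since `A + p w B = 1` the mean collapses to
`A (m₀ / m) (μ₀ - θ)`.
-/

open MeasureTheory ProbabilityTheory

namespace ProbabilityTheory

variable {Ω : Type*} [MeasurableSpace Ω] {P : Measure Ω}

lemma integral_const_add_sq [IsProbabilityMeasure P] {Y : Ω → ℝ} (hY : MemLp Y 2 P) (c : ℝ) :
    ∫ ω, (c + Y ω) ^ 2 ∂P = (c + ∫ ω, Y ω ∂P) ^ 2 + Var[Y; P] := by
  have hmean : ∫ ω, (c + Y ω) ∂P = c + ∫ ω, Y ω ∂P := by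
    rw [integral_add (integrable_const c) (hY.integrable one_le_two), integral_const]
    simp
  have h := variance_eq_sub (X := fun ω ↦ c + Y ω) ((memLp_const c).add hY)
  rw [variance_const_add hY.aestronglyMeasurable] at h
  simp only [Pi.pow_apply] at h
  rw [hmean] at h
  linarith

lemma iIndepFun.variance_sum_const_mul {ι : Type*} [Fintype ι] {X : ι → Ω → ℝ}
    (hX : iIndepFun X P) (hL2 : ∀ i, MemLp (X i) 2 P) (a : ι → ℝ) :
    Var[fun ω ↦ ∑ i, a i * X i ω; P] = ∑ i, a i ^ 2 * Var[X i; P] := by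
  have h := IndepFun.variance_sum (μ := P) (X := fun i ω ↦ a i * X i ω) (s := Finset.univ)
    (fun i _ ↦ (hL2 i).const_mul (a i))
    (fun i _ j _ hij ↦ (hX.indepFun hij).comp (measurable_const_mul _) (measurable_const_mul _))
  simpa only [← Finset.sum_fn, variance_const_mul] using h

lemma iIndepFun.integral_const_add_sum_mul_sq [IsProbabilityMeasure P] {ι : Type*} [Fintype ι]
    {X : ι → Ω → ℝ} (hX : iIndepFun X P) (hL2 : ∀ i, MemLp (X i) 2 P) (c : ℝ) (a : ι → ℝ) :
    ∫ ω, (c + ∑ i, a i * X i ω) ^ 2 ∂P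
      = (c + ∑ i, a i * ∫ ω, X i ω ∂P) ^ 2 + ∑ i, a i ^ 2 * Var[X i; P] := by
  have hmul : ∀ i, MemLp (fun ω ↦ a i * X i ω) 2 P := fun i ↦ (hL2 i).const_mul (a i)
  rw [integral_const_add_sq (memLp_finsetSum _ fun i _ ↦ hmul i),
    integral_finsetSum _ fun i _ ↦ (hmul i).integrable one_le_two,
    hX.variance_sum_const_mul hL2]
  simp only [integral_const_mul]

lemma iIndepFun.integral_sq_const_add_block_sums [IsProbabilityMeasure P]
    {ι₁ ι₂ ι₃ ι₄ : Type*} [Fintype ι₁] [Fintype ι₂] [Fintype ι₃] [Fintype ι₄]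
    {S : Ω → ℝ} {T : ι₁ → Ω → ℝ} {Δ : ι₂ → Ω → ℝ} {E : ι₃ → Ω → ℝ} {G : ι₄ → Ω → ℝ}
    (hindep : iIndepFun
      (Sum.elim (fun _ : Unit => S) (Sum.elim T (Sum.elim Δ (Sum.elim E G)))) P)
    (hS : MemLp S 2 P) (hT : ∀ j, MemLp (T j) 2 P) (hΔ : ∀ j, MemLp (Δ j) 2 P)
    (hE : ∀ j, MemLp (E j) 2 P) (hG : ∀ j, MemLp (G j) 2 P) (c a b d e f : ℝ) :
    ∫ ω, (c + a * S ω + b * ∑ j, T j ω + d * ∑ j, Δ j ω + e * ∑ j, E j ω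
        + f * ∑ j, G j ω) ^ 2 ∂P
      = (c + a * ∫ ω, S ω ∂P + b * ∑ j, ∫ ω, T j ω ∂P + d * ∑ j, ∫ ω, Δ j ω ∂P
          + e * ∑ j, ∫ ω, E j ω ∂P + f * ∑ j, ∫ ω, G j ω ∂P) ^ 2
        + a ^ 2 * Var[S; P] + b ^ 2 * ∑ j, Var[T j; P] + d ^ 2 * ∑ j, Var[Δ j; P]
        + e ^ 2 * ∑ j, Var[E j; P] + f ^ 2 * ∑ j, Var[G j; P] := by
  have h := hindep.integral_const_add_sum_mul_sq
    (by rintro (_ | j | j | j | j); exacts [hS, hT j, hΔ j, hE j, hG j]) c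
    (Sum.elim (fun _ ↦ a) (Sum.elim (fun _ ↦ b)
      (Sum.elim (fun _ ↦ d) (Sum.elim (fun _ ↦ e) (fun _ ↦ f)))))
  simpa only [Fintype.sum_sum_type, Sum.elim_inl, Sum.elim_inr, Fintype.univ_unit,
    Finset.sum_singleton, ← Finset.mul_sum, add_assoc] using h

end ProbabilityTheory

theorem pivoted_estimator_mse_general {Ω : Type*} [MeasurableSpace Ω] (P : Measure Ω)
    [IsProbabilityMeasure P]
    (J K : ℕ) (hK : 1 ≤ K) (hKJ : K ≤ J - 1)
    (θ μ₀ w ψ m₀ m₁ : ℝ) (hm : 0 < m₀ + m₁)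
    (S₁ : Ω → ℝ) (T : Fin K → Ω → ℝ) (Δ : Fin (J - K) → Ω → ℝ)
    (E G : Fin K → Ω → ℝ)
    (v_s v_t v_δ v_ε v_γ : ℝ)
    (hindep : iIndepFun
      (Sum.elim (fun _ : Unit => S₁) (Sum.elim T (Sum.elim Δ (Sum.elim E G)))) P)
    (hS₁L2 : MemLp S₁ 2 P) (hTL2 : ∀ j, MemLp (T j) 2 P)
    (hΔL2 : ∀ j, MemLp (Δ j) 2 P) (hEL2 : ∀ j, MemLp (E j) 2 P)
    (hGL2 : ∀ j, MemLp (G j) 2 P)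
    (hS₁m : ∫ ω, S₁ ω ∂P = θ) (hTm : ∀ j, ∫ ω, T j ω ∂P = θ)
    (hΔm : ∀ j, ∫ ω, Δ j ω ∂P = 0) (hEm : ∀ j, ∫ ω, E j ω ∂P = 0)
    (hGm : ∀ j, ∫ ω, G j ω ∂P = 0)
    (hSv : variance S₁ P = v_s) (hTv : ∀ j, variance (T j) P = v_t)
    (hΔv : ∀ j, variance (Δ j) P = v_δ) (hEv : ∀ j, variance (E j) P = v_ε)
    (hGv : ∀ j, variance (G j) P = v_γ) :
    let p : ℝ := (K : ℝ) / J
    let m : ℝ := m₀ + m₁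
    let A : ℝ := 1 - (1 + ψ) * p * w + ψ * p ^ 2 * w ^ 2
    let B : ℝ := (1 + ψ) - ψ * p * w
    let s : Ω → ℝ := fun ω => (m₀ * μ₀ + m₁ * S₁ ω) / m
    let fbar : Ω → ℝ := fun ω =>
      (1 - p * w) * s ω + p * w * ((1 / (K : ℝ)) * ∑ j, T j ω)
        + (1 - p) * ((1 / ((J : ℝ) - K)) * ∑ j, Δ j ω)
        + p * ((1 / (K : ℝ)) * ∑ j, E j ω)
    let gbar : Ω → ℝ := fun ω =>
      (1 - p ^ 2 * w ^ 2) * s ω + p ^ 2 * w ^ 2 * ((1 / (K : ℝ)) * ∑ j, T j ω)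
        + (1 - p) * ((1 / ((J : ℝ) - K)) * ∑ j, Δ j ω)
        + p ^ 2 * w * ((1 / (K : ℝ)) * ∑ j, E j ω)
        + p * ((1 / (K : ℝ)) * ∑ j, G j ω)
    ∫ ω, ((1 + ψ) * fbar ω - ψ * gbar ω - θ) ^ 2 ∂P
      = A ^ 2 * ((m₀ / m) ^ 2 * (μ₀ - θ) ^ 2 + (m₁ / m) ^ 2 * v_s)
        + (p * w ^ 2 * B ^ 2 / (J : ℝ)) * v_t
        + ((1 - p) / (J : ℝ)) * v_δ
        + (p * B ^ 2 / (J : ℝ)) * v_ε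
        + (ψ ^ 2 * p / (J : ℝ)) * v_γ := by
  intro p m A B s fbar gbar
  have hK0 : (K : ℝ) ≠ 0 := by positivity
  have hJ0 : (J : ℝ) ≠ 0 := by exact_mod_cast (by omega : J ≠ 0)
  have hJK : ((J - K : ℕ) : ℝ) = J - K := by rw [Nat.cast_sub (by omega)]
  have hJK0 : (J : ℝ) - K ≠ 0 := by rw [← hJK]; exact_mod_cast (by omega : J - K ≠ 0)
  have herror : ∀ ω, (1 + ψ) * fbar ω - ψ * gbar ω - θ
      = (A * m₀ * μ₀ / m - θ) + A * m₁ / m * S₁ ω + p * w * B / K * ∑ j, T j ω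
        + (1 - p) / (J - K) * ∑ j, Δ j ω + p * B / K * ∑ j, E j ω
        + -(ψ * p) / K * ∑ j, G j ω := by
    intro ω
    simp only [fbar, gbar, s, A, B]
    field_simp
    ring
  rw [integral_congr_ae (ae_of_all P fun ω ↦ congrArg (· ^ 2) (herror ω)),
    hindep.integral_sq_const_add_block_sums hS₁L2 hTL2 hΔL2 hEL2 hGL2]
  simp only [hS₁m, hTm, hΔm, hEm, hGm, hSv, hTv, hΔv, hEv, hGv, Finset.sum_const,
    Finset.card_univ, Fintype.card_fin, nsmul_eq_mul, hJK]
  simp only [p, A, B, m]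
  field_simp
  ring

/-- The inner (conditional-on-θ) expected squared error of the pivoted estimator
`θ̂_ψ = (1+ψ)f̄ - ψḡ` in the nested-symmetric model. The family of signals and errors
`S₁, T₁,…,T_K, Δ_{K+1},…,Δ_J, E₁,…,E_K, G₁,…,G_K` is mutually independent and
square-integrable, with the stated means and variances. -/
theorem pivoted_estimator_mse {Ω : Type*} [MeasurableSpace Ω] (P : Measure Ω)
    [IsProbabilityMeasure P]
    (J K : ℕ) (hJ : 2 ≤ J) (hK : 1 ≤ K) (hKJ : K ≤ J - 1)
    (θ μ₀ w ψ m₀ m₁ : ℝ) (hm : 0 < m₀ + m₁)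
    (S₁ : Ω → ℝ) (T : Fin K → Ω → ℝ) (Δ : Fin (J - K) → Ω → ℝ)
    (E G : Fin K → Ω → ℝ)
    (v_s v_t v_δ v_ε v_γ : ℝ)
    (hindep : iIndepFun
      (Sum.elim (fun _ : Unit => S₁) (Sum.elim T (Sum.elim Δ (Sum.elim E G)))) P)
    (hS₁L2 : MemLp S₁ 2 P) (hTL2 : ∀ j, MemLp (T j) 2 P)
    (hΔL2 : ∀ j, MemLp (Δ j) 2 P) (hEL2 : ∀ j, MemLp (E j) 2 P)
    (hGL2 : ∀ j, MemLp (G j) 2 P)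
    (hS₁m : ∫ ω, S₁ ω ∂P = θ) (hTm : ∀ j, ∫ ω, T j ω ∂P = θ)
    (hΔm : ∀ j, ∫ ω, Δ j ω ∂P = 0) (hEm : ∀ j, ∫ ω, E j ω ∂P = 0)
    (hGm : ∀ j, ∫ ω, G j ω ∂P = 0)
    (hSv : variance S₁ P = v_s) (hTv : ∀ j, variance (T j) P = v_t)
    (hΔv : ∀ j, variance (Δ j) P = v_δ) (hEv : ∀ j, variance (E j) P = v_ε)
    (hGv : ∀ j, variance (G j) P = v_γ) :
    let p : ℝ := (K : ℝ) / J
    let m : ℝ := m₀ + m₁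
    let A : ℝ := 1 - (1 + ψ) * p * w + ψ * p ^ 2 * w ^ 2
    let B : ℝ := (1 + ψ) - ψ * p * w
    let s : Ω → ℝ := fun ω => (m₀ * μ₀ + m₁ * S₁ ω) / m
    let fbar : Ω → ℝ := fun ω =>
      (1 - p * w) * s ω + p * w * ((1 / (K : ℝ)) * ∑ j, T j ω)
        + (1 - p) * ((1 / ((J : ℝ) - K)) * ∑ j, Δ j ω)
        + p * ((1 / (K : ℝ)) * ∑ j, E j ω)
    let gbar : Ω → ℝ := fun ω =>
      (1 - p ^ 2 * w ^ 2) * s ω + p ^ 2 * w ^ 2 * ((1 / (K : ℝ)) * ∑ j, T j ω)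
        + (1 - p) * ((1 / ((J : ℝ) - K)) * ∑ j, Δ j ω)
        + p ^ 2 * w * ((1 / (K : ℝ)) * ∑ j, E j ω)
        + p * ((1 / (K : ℝ)) * ∑ j, G j ω)
    ∫ ω, ((1 + ψ) * fbar ω - ψ * gbar ω - θ) ^ 2 ∂P
      = A ^ 2 * ((m₀ / m) ^ 2 * (μ₀ - θ) ^ 2 + (m₁ / m) ^ 2 * v_s)
        + (p * w ^ 2 * B ^ 2 / (J : ℝ)) * v_t
        + ((1 - p) / (J : ℝ)) * v_δ
        + (p * B ^ 2 / (J : ℝ)) * v_ε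
        + (ψ ^ 2 * p / (J : ℝ)) * v_γ :=
  pivoted_estimator_mse_general P J K hK hKJ θ μ₀ w ψ m₀ m₁ hm S₁ T Δ E G v_s v_t v_δ v_ε v_γ hindep
    hS₁L2 hTL2 hΔL2 hEL2 hGL2 hS₁m hTm hΔm hEm hGm hSv hTv hΔv hEv hGv
end
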